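/- For all positive integers n, d and all k ≥ 1, the set Σ_{n,2d}^k of finite sums of squares of real n-ary d-ic forms having at most k monomials is a closed convex cone: it is closed under addition and under multiplication by nonnegative reals, and it is sequentially closed under coefficientwise convergence (if p_m ∈ Σ_{n,2d}^k for all m and the coefficients of p_m converge to the coefficients of a polynomial p, then p ∈ Σ_{n,2d}^k). -/

import Mathlib

open MvPolynomial Filter

/-- `F_{n,d}^k`: real forms of degree `d` in `n` variables with at most `k` monomials. -/
def IsFormK (n d k : ℕ) (h : MvPolynomial (Fin n) ℝ) : Prop :=
  h.IsHomogeneous d ∧ h.support.card ≤ k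

/-- `Σ_{n,2d}^k`: finite sums of squares of forms in `F_{n,d}^k`. -/
def SigmaSOS (n d k : ℕ) : Set (MvPolynomial (Fin n) ℝ) :=
  { p | ∃ (m : ℕ) (f : Fin m → MvPolynomial (Fin n) ℝ),
      (∀ j, IsFormK n d k (f j)) ∧ p = ∑ j, (f j) ^ 2 }

/-!
Identify a form of degree `2d` with its vector of coefficients. Then `Σ_{n,2d}^k` is the convex
cone spanned by the set `S` of coefficient vectors of the squares `h²`, where `h` runs over the
`k`-sparse `d`-ic forms whose coefficient vector has norm one. The set `S` is compact, because
sparsity is a closed condition, and so is its convex hull, by Carathéodory. Moreover `0 ∉ conv S`,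
since a positive combination of squares of nonzero polynomials is nonzero. Hence the norms on
`conv S` are bounded below by some `ε > 0`, so in a convergent sequence `tₘ • qₘ` with
`qₘ ∈ conv S` the scalars `tₘ` stay bounded, and compactness puts the limit back in the cone.
-/

open scoped Pointwise Topology

theorem isClosed_setOf_card_ne_zero_le {ι M : Type*} [Fintype ι] [TopologicalSpace M] [T1Space M]
    [Zero M] [DecidableEq M] (k : ℕ) :
    IsClosed {u : ι → M | (Finset.univ.filter fun i => u i ≠ 0).card ≤ k} := by
  refine isOpen_compl_iff.mp (isOpen_iff_forall_mem_open.mpr fun u hu => ?_)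
  refine ⟨⋂ i ∈ Finset.univ.filter fun i => u i ≠ 0, {v | v i ≠ 0}, fun v hv => ?_,
    isOpen_biInter_finset fun i _ => isOpen_compl_singleton.preimage (continuous_apply i),
    by simp⟩
  simp only [Set.mem_iInter, Set.mem_compl_iff, Set.mem_ofPred_eq, not_le] at hu hv ⊢
  exact hu.trans_le (Finset.card_le_card fun i hi => by simpa using hv i hi)

theorem PointedCone.coe_hull_eq_insert_zero_Ici_smul_convexHull {𝕜 F : Type*} [Field 𝕜]
    [LinearOrder 𝕜] [IsStrictOrderedRing 𝕜] [AddCommGroup F] [Module 𝕜 F] (S : Set F) :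
    (PointedCone.hull 𝕜 S : Set F) = insert 0 (Set.Ici (0 : 𝕜) • convexHull 𝕜 S) := by
  refine subset_antisymm (fun x hx => ?_) ?_
  · induction hx using Submodule.span_induction with
    | mem x hx => exact Or.inr ⟨1, zero_le_one, x, subset_convexHull 𝕜 S hx, one_smul _ _⟩
    | zero => exact Or.inl rfl
    | add x y _ _ hx hy =>
      rcases hx with rfl | ⟨a, ha, p, hp, rfl⟩
      · simpa using hy
      rcases hy with rfl | ⟨b, hb, q, hq, rfl⟩
      · simpa using Or.inr ⟨a, ha, p, hp, rfl⟩
      refine Or.inr (Set.smul_set_subset_smul (add_nonneg ha hb) ?_)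
      rw [(convex_convexHull 𝕜 S).add_smul ha hb]
      exact Set.add_mem_add (Set.smul_mem_smul_set hp) (Set.smul_mem_smul_set hq)
    | smul c x _ hx =>
      rcases hx with rfl | ⟨a, ha, p, hp, rfl⟩
      · simp
      · exact Or.inr ⟨c * a, mul_nonneg c.2 ha, p, hp, mul_smul (c : 𝕜) a p⟩
  · rintro _ (rfl | ⟨a, ha, p, hp, rfl⟩)
    · exact zero_mem _
    · exact PointedCone.smul_mem _ ha
        (convexHull_min PointedCone.subset_hull (PointedCone.convex _) hp)

section Cone

variable {E : Type*} [NormedAddCommGroup E] [NormedSpace ℝ E]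

theorem IsCompact.convexHull [FiniteDimensional ℝ E] {S : Set E} (hS : IsCompact S) :
    IsCompact (convexHull ℝ S) := by
  let combo (m : ℕ) (wz : (Fin m → ℝ) × (Fin m → E)) : E := ∑ i, wz.1 i • wz.2 i
  have hcombo : _root_.convexHull ℝ S = ⋃ m ∈ Finset.range (Module.finrank ℝ E + 2),
      combo m '' (stdSimplex ℝ (Fin m) ×ˢ Set.univ.pi fun _ => S) := by
    refine subset_antisymm (fun x hx => ?_) ?_
    · obtain ⟨ι, _, z, w, hzS, hz, hw, hw1, rfl⟩ := eq_pos_convex_span_of_mem_convexHull hx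
      have hcard : Fintype.card ι < Module.finrank ℝ E + 2 :=
        Nat.lt_succ_of_le (hz.card_le_finrank_succ.trans (by gcongr; exact Submodule.finrank_le _))
      let e := Fintype.equivFin ι
      refine Set.mem_iUnion₂.mpr ⟨_, Finset.mem_range.mpr hcard,
        (w ∘ e.symm, z ∘ e.symm), ⟨⟨fun i => (hw _).le, ?_⟩, fun i _ => hzS ⟨_, rfl⟩⟩, ?_⟩
      · simpa [hw1] using e.symm.sum_comp w
      · exact e.symm.sum_comp fun i => w i • z i
    · simp only [Set.iUnion_subset_iff]
      rintro m - _ ⟨⟨w, z⟩, ⟨hw, hz⟩, rfl⟩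
      exact (convex_convexHull ℝ S).sum_mem (fun i _ => hw.1 i) hw.2
        fun i _ => subset_convexHull ℝ S (hz i trivial)
  rw [hcombo]
  exact (Finset.range _).isCompact_biUnion fun m _ =>
    ((isCompact_stdSimplex ℝ _).prod (isCompact_univ_pi fun _ => hS)).image (by fun_prop)

theorem IsCompact.isClosed_Ici_smul {K : Set E} (hK : IsCompact K) (h0 : (0 : E) ∉ K) :
    IsClosed (Set.Ici (0 : ℝ) • K) := by
  obtain ⟨ε, hε, hball⟩ := Metric.isOpen_iff.mp hK.isClosed.isOpen_compl 0 h0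
  have hK_norm : ∀ q ∈ K, ε ≤ ‖q‖ := fun q hq => by
    by_contra! h
    exact hball (mem_ball_zero_iff.mpr h) hq
  refine isClosed_of_closure_subset fun x hx => ?_
  have hbounded :
      Metric.ball x 1 ∩ Set.Ici (0 : ℝ) • K ⊆ Set.Icc (0 : ℝ) ((‖x‖ + 1) / ε) • K := by
    rintro _ ⟨hy, t, ht, q, hq, rfl⟩
    refine Set.smul_mem_smul ⟨ht, (le_div_iff₀ hε).mpr ?_⟩ hq
    calc t * ε ≤ t * ‖q‖ := mul_le_mul_of_nonneg_left (hK_norm q hq) ht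
      _ = ‖t • q‖ := by rw [norm_smul, Real.norm_of_nonneg ht]
      _ ≤ ‖x‖ + 1 := (norm_lt_of_mem_ball hy).le
  have hx' := (isCompact_Icc.smul_set hK).isClosed.closure_subset_iff.mpr hbounded
    (Metric.isOpen_ball.inter_closure ⟨Metric.mem_ball_self one_pos, hx⟩)
  exact Set.smul_subset_smul_right Set.Icc_subset_Ici_self hx'

theorem PointedCone.isClosed_hull [FiniteDimensional ℝ E] {S : Set E} (hS : IsCompact S)
    (h0 : (0 : E) ∉ convexHull ℝ S) : IsClosed (PointedCone.hull ℝ S : Set E) := by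
  rw [coe_hull_eq_insert_zero_Ici_smul_convexHull, Set.insert_eq]
  exact isClosed_singleton.union (hS.convexHull.isClosed_Ici_smul h0)

end Cone

namespace MvPolynomial

theorem IsHomogeneous.sq {σ R : Type*} [CommSemiring R] {p : MvPolynomial σ R}
    {N : ℕ} (hp : p.IsHomogeneous N) : (p ^ 2).IsHomogeneous (2 * N) := by
  simpa [mul_comm] using hp.pow 2

theorem IsHomogeneous.of_tendsto_coeff {ι σ R : Type*} [CommSemiring R]
    [TopologicalSpace R] [T2Space R] {l : Filter ι} [l.NeBot] {N : ℕ}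
    {p : ι → MvPolynomial σ R} {q : MvPolynomial σ R} (hp : ∀ m, (p m).IsHomogeneous N)
    (hlim : ∀ a, Tendsto (fun m => coeff a (p m)) l (𝓝 (coeff a q))) : q.IsHomogeneous N := by
  intro a ha
  by_contra hdeg
  have hzero : ∀ m, coeff a (p m) = 0 := fun m =>
    (hp m).coeff_eq_zero (by rwa [Finsupp.degree_eq_weight_one])
  refine ha (tendsto_nhds_unique (hlim a) ?_)
  simpa only [hzero] using tendsto_const_nhds

theorem eq_zero_of_sum_smul_sq_eq_zero {ι σ : Type*} [Fintype ι] {w : ι → ℝ}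
    (hw : ∀ i, 0 < w i) {f : ι → MvPolynomial σ ℝ} (h : ∑ i, w i • f i ^ 2 = 0) (i : ι) :
    f i = 0 := by
  refine MvPolynomial.funext fun x => ?_
  have hx : ∑ j, w j * eval x (f j) ^ 2 = 0 := by simpa [smul_eval] using congrArg (eval x) h
  have := (Fintype.sum_eq_zero_iff_of_nonneg fun j => mul_nonneg (hw j).le (sq_nonneg _)).mp hx
  simpa [(hw i).ne'] using congrFun this i

section CoeffVec

variable {R σ : Type*} [CommSemiring R] [Fintype σ] [DecidableEq σ] {N : ℕ}

variable (σ) in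
def monomialsOfDegree (N : ℕ) : Finset (σ →₀ ℕ) := Finset.univ.finsuppAntidiag N

theorem mem_monomialsOfDegree {a : σ →₀ ℕ} : a ∈ monomialsOfDegree σ N ↔ a.degree = N := by
  simp [monomialsOfDegree, Finset.mem_finsuppAntidiag, Finsupp.degree_eq_sum]

variable (R σ) in
noncomputable def coeffVec (N : ℕ) : MvPolynomial σ R →ₗ[R] (monomialsOfDegree σ N → R) :=
  LinearMap.pi fun a => lcoeff R a.1

variable (R σ) in
noncomputable def ofCoeffVec (N : ℕ) : (monomialsOfDegree σ N → R) →ₗ[R] MvPolynomial σ R :=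
  Fintype.linearCombination R fun a => monomial a.1 1

@[simp]
theorem coeffVec_apply (p : MvPolynomial σ R) (a : monomialsOfDegree σ N) :
    coeffVec R σ N p a = coeff a.1 p := rfl

theorem ofCoeffVec_eq_sum (u : monomialsOfDegree σ N → R) :
    ofCoeffVec R σ N u = ∑ a, monomial a.1 (u a) := by
  simp [ofCoeffVec, Fintype.linearCombination_apply, smul_monomial]

theorem isHomogeneous_ofCoeffVec (u : monomialsOfDegree σ N → R) :
    (ofCoeffVec R σ N u).IsHomogeneous N := by
  rw [ofCoeffVec_eq_sum]
  exact IsHomogeneous.sum _ _ _ fun a _ => isHomogeneous_monomial _ (mem_monomialsOfDegree.mp a.2)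

@[simp]
theorem coeff_ofCoeffVec (u : monomialsOfDegree σ N → R) (a : monomialsOfDegree σ N) :
    coeff a.1 (ofCoeffVec R σ N u) = u a := by
  simp only [ofCoeffVec_eq_sum, coeff_sum, coeff_monomial, ← Subtype.ext_iff,
    Finset.sum_ite_eq', Finset.mem_univ, if_true]

@[simp]
theorem coeffVec_ofCoeffVec (u : monomialsOfDegree σ N → R) :
    coeffVec R σ N (ofCoeffVec R σ N u) = u :=
  _root_.funext (coeff_ofCoeffVec u)

theorem ofCoeffVec_coeffVec {p : MvPolynomial σ R} (hp : p.IsHomogeneous N) :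
    ofCoeffVec R σ N (coeffVec R σ N p) = p := by
  ext a
  by_cases ha : a ∈ monomialsOfDegree σ N
  · exact coeff_ofCoeffVec _ ⟨a, ha⟩
  · rw [mem_monomialsOfDegree] at ha
    rw [(isHomogeneous_ofCoeffVec _).coeff_eq_zero ha, hp.coeff_eq_zero ha]

theorem injOn_coeffVec : Set.InjOn (coeffVec R σ N) {p | p.IsHomogeneous N} :=
  fun p hp q hq hpq => by rw [← ofCoeffVec_coeffVec hp, hpq, ofCoeffVec_coeffVec hq]

theorem card_support_ofCoeffVec_le [DecidableEq R] (u : monomialsOfDegree σ N → R) :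
    (ofCoeffVec R σ N u).support.card ≤ (Finset.univ.filter fun a => u a ≠ 0).card := by
  refine (Finset.card_le_card fun a ha => ?_).trans
    (Finset.card_image_le (f := Subtype.val) (s := Finset.univ.filter fun a => u a ≠ 0))
  have ha' := mem_support_iff.mp ha
  have hdeg : a ∈ monomialsOfDegree σ N := by
    by_contra h
    exact ha' ((isHomogeneous_ofCoeffVec u).coeff_eq_zero (mt mem_monomialsOfDegree.mpr h))
  refine Finset.mem_image.mpr ⟨⟨a, hdeg⟩, ?_, rfl⟩
  simpa [← coeff_ofCoeffVec u ⟨a, hdeg⟩] using ha'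

theorem card_coeffVec_ne_zero_le [DecidableEq R] (p : MvPolynomial σ R) :
    (Finset.univ.filter fun a => coeffVec R σ N p a ≠ 0).card ≤ p.support.card :=
  Finset.card_le_card_of_injOn Subtype.val
    (fun _ ha => mem_support_iff.mpr (Finset.mem_filter.mp ha).2) Subtype.val_injective.injOn

theorem continuous_coeff_ofCoeffVec (a : σ →₀ ℕ) :
    Continuous fun u : monomialsOfDegree σ N → ℝ => coeff a (ofCoeffVec ℝ σ N u) :=
  (lcoeff ℝ a ∘ₗ ofCoeffVec ℝ σ N).continuous_of_finiteDimensional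

end CoeffVec

end MvPolynomial

section SigmaSOS

variable {n d k : ℕ}

theorem IsFormK.smul (c : ℝ) {h : MvPolynomial (Fin n) ℝ} (hh : IsFormK n d k h) :
    IsFormK n d k (c • h) :=
  ⟨by simpa [smul_eq_C_mul] using hh.1.C_mul c, (Finset.card_le_card support_smul).trans hh.2⟩

theorem sq_mem_sigmaSOS {h : MvPolynomial (Fin n) ℝ} (hh : IsFormK n d k h) :
    h ^ 2 ∈ SigmaSOS n d k :=
  ⟨1, fun _ => h, fun _ => hh, by simp⟩

theorem add_mem_sigmaSOS {p q : MvPolynomial (Fin n) ℝ} (hp : p ∈ SigmaSOS n d k)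
    (hq : q ∈ SigmaSOS n d k) : p + q ∈ SigmaSOS n d k := by
  obtain ⟨m₁, f₁, hf₁, rfl⟩ := hp
  obtain ⟨m₂, f₂, hf₂, rfl⟩ := hq
  exact ⟨m₁ + m₂, Fin.append f₁ f₂, Fin.addCases (by simpa using hf₁) (by simpa using hf₂),
    by simp [Fin.sum_univ_add]⟩

theorem smul_mem_sigmaSOS {c : ℝ} (hc : 0 ≤ c) {p : MvPolynomial (Fin n) ℝ}
    (hp : p ∈ SigmaSOS n d k) : c • p ∈ SigmaSOS n d k := by
  obtain ⟨m, f, hf, rfl⟩ := hp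
  exact ⟨m, fun j => √c • f j, fun j => (hf j).smul _,
    by simp [Finset.smul_sum, smul_pow, Real.sq_sqrt hc]⟩

theorem isHomogeneous_of_mem_sigmaSOS {p : MvPolynomial (Fin n) ℝ} (hp : p ∈ SigmaSOS n d k) :
    p.IsHomogeneous (2 * d) := by
  obtain ⟨m, f, hf, rfl⟩ := hp
  exact IsHomogeneous.sum _ _ _ fun j _ => (hf j).1.sq

variable (n d k) in
def sosCone : PointedCone ℝ (MvPolynomial (Fin n) ℝ) where
  carrier := SigmaSOS n d k
  add_mem' := add_mem_sigmaSOS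
  zero_mem' := ⟨0, Fin.elim0, Fin.rec0, by simp⟩
  smul_mem' c _ hp := smul_mem_sigmaSOS c.2 hp

variable (n d k) in
def sparseUnitVectors : Set (monomialsOfDegree (Fin n) d → ℝ) :=
  Metric.sphere 0 1 ∩ {u | (Finset.univ.filter fun a => u a ≠ 0).card ≤ k}

variable (n d) in
noncomputable def squareCoeffVec (u : monomialsOfDegree (Fin n) d → ℝ) :
    monomialsOfDegree (Fin n) (2 * d) → ℝ :=
  coeffVec ℝ (Fin n) (2 * d) (ofCoeffVec ℝ (Fin n) d u ^ 2)

variable (n d k) in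
def sparseSquares : Set (monomialsOfDegree (Fin n) (2 * d) → ℝ) :=
  squareCoeffVec n d '' sparseUnitVectors n d k

theorem continuous_squareCoeffVec : Continuous (squareCoeffVec n d) := by
  refine continuous_pi fun a => ?_
  simp only [squareCoeffVec, coeffVec_apply, sq, coeff_mul]
  exact continuous_finsetSum _ fun x _ =>
    (continuous_coeff_ofCoeffVec _).mul (continuous_coeff_ofCoeffVec _)

theorem isCompact_sparseSquares : IsCompact (sparseSquares n d k) :=
  ((isCompact_sphere 0 1).inter_right (isClosed_setOf_card_ne_zero_le k)).image
    continuous_squareCoeffVec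

theorem isFormK_ofCoeffVec {u : monomialsOfDegree (Fin n) d → ℝ}
    (hu : (Finset.univ.filter fun a => u a ≠ 0).card ≤ k) :
    IsFormK n d k (ofCoeffVec ℝ (Fin n) d u) :=
  ⟨isHomogeneous_ofCoeffVec u, (card_support_ofCoeffVec_le u).trans hu⟩

theorem zero_notMem_convexHull_sparseSquares : 0 ∉ convexHull ℝ (sparseSquares n d k) := by
  intro h0
  obtain ⟨ι, _, z, w, hzS, -, hw, hw1, hsum⟩ := eq_pos_convex_span_of_mem_convexHull h0
  choose u hu hzu using fun i => hzS ⟨i, rfl⟩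
  have hP : ∑ i, w i • ofCoeffVec ℝ (Fin n) d (u i) ^ 2 = 0 := by
    refine injOn_coeffVec (N := 2 * d) (IsHomogeneous.sum _ _ _ fun i _ => ?_)
      (isHomogeneous_zero _ _ _) ?_
    · simpa [smul_eq_C_mul] using (isHomogeneous_ofCoeffVec (u i)).sq.C_mul (w i)
    · have hz : ∀ i, z i = coeffVec ℝ (Fin n) (2 * d) (ofCoeffVec ℝ (Fin n) d (u i) ^ 2) :=
        fun i => (hzu i).symm
      simpa [hz] using hsum
  obtain ⟨i⟩ : Nonempty ι := by
    by_contra h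
    simp [not_nonempty_iff.mp h] at hw1
  have hui : u i = 0 := by
    simpa using congrArg (coeffVec ℝ (Fin n) d) (eq_zero_of_sum_smul_sq_eq_zero hw hP i)
  simpa [hui] using (hu i).1

theorem coeffVec_sq_mem_hull_sparseSquares {h : MvPolynomial (Fin n) ℝ} (hh : IsFormK n d k h) :
    coeffVec ℝ (Fin n) (2 * d) (h ^ 2) ∈ PointedCone.hull ℝ (sparseSquares n d k) := by
  rcases eq_or_ne (coeffVec ℝ (Fin n) d h) 0 with hv | hv
  · rw [← ofCoeffVec_coeffVec hh.1, hv]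
    simp
  set v := coeffVec ℝ (Fin n) d h
  have hu : ‖v‖⁻¹ • v ∈ sparseUnitVectors n d k := by
    refine ⟨by simp [norm_smul, hv],
      (Finset.card_le_card fun a ha => ?_).trans ((card_coeffVec_ne_zero_le h).trans hh.2)⟩
    simp only [Finset.mem_filter, Finset.mem_univ, true_and, Pi.smul_apply, smul_eq_mul] at ha ⊢
    exact right_ne_zero_of_mul ha
  have hsq : coeffVec ℝ (Fin n) (2 * d) (h ^ 2) = ‖v‖ ^ 2 • squareCoeffVec n d (‖v‖⁻¹ • v) := by
    rw [squareCoeffVec, map_smul, ofCoeffVec_coeffVec hh.1, smul_pow, map_smul, smul_smul,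
      ← mul_pow, mul_inv_cancel₀ (norm_ne_zero_iff.mpr hv), one_pow, one_smul]
  rw [hsq]
  exact PointedCone.smul_mem _ (sq_nonneg _) (PointedCone.subset_hull ⟨_, hu, rfl⟩)

theorem map_sosCone : (sosCone n d k).map (coeffVec ℝ (Fin n) (2 * d)) =
    PointedCone.hull ℝ (sparseSquares n d k) := by
  refine le_antisymm ?_ (Submodule.span_le.mpr ?_)
  · rintro _ ⟨_, ⟨m, f, hf, rfl⟩, rfl⟩
    simp only [LinearMap.coe_restrictScalars, map_sum]
    exact Submodule.sum_mem _ fun j _ => coeffVec_sq_mem_hull_sparseSquares (hf j)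
  · rintro _ ⟨u, hu, rfl⟩
    exact ⟨_, sq_mem_sigmaSOS (isFormK_ofCoeffVec hu.2), rfl⟩

theorem mem_sigmaSOS_iff {p : MvPolynomial (Fin n) ℝ} (hp : p.IsHomogeneous (2 * d)) :
    p ∈ SigmaSOS n d k ↔
      coeffVec ℝ (Fin n) (2 * d) p ∈ PointedCone.hull ℝ (sparseSquares n d k) := by
  rw [← map_sosCone, PointedCone.mem_map]
  refine ⟨fun hp' => ⟨p, hp', rfl⟩, fun ⟨q, hq, hqp⟩ => ?_⟩
  rwa [← injOn_coeffVec (isHomogeneous_of_mem_sigmaSOS hq) hp hqp]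

end SigmaSOS

theorem sigma_sos_closed_convex_cone (n d k : ℕ) :
    (∀ p q : MvPolynomial (Fin n) ℝ,
        p ∈ SigmaSOS n d k → q ∈ SigmaSOS n d k → p + q ∈ SigmaSOS n d k) ∧
    (∀ (c : ℝ) (p : MvPolynomial (Fin n) ℝ),
        0 ≤ c → p ∈ SigmaSOS n d k → c • p ∈ SigmaSOS n d k) ∧
    (∀ (pm : ℕ → MvPolynomial (Fin n) ℝ) (p : MvPolynomial (Fin n) ℝ),
        (∀ m, pm m ∈ SigmaSOS n d k) →
        (∀ i : Fin n →₀ ℕ,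
          Tendsto (fun m => coeff i (pm m)) atTop (nhds (coeff i p))) →
        p ∈ SigmaSOS n d k) := by
  refine ⟨fun _ _ => add_mem_sigmaSOS, fun _ _ hc => smul_mem_sigmaSOS hc, fun pm p hpm hlim => ?_⟩
  have hpm_hom m := isHomogeneous_of_mem_sigmaSOS (hpm m)
  rw [mem_sigmaSOS_iff (IsHomogeneous.of_tendsto_coeff hpm_hom hlim)]
  exact (PointedCone.isClosed_hull isCompact_sparseSquares
    zero_notMem_convexHull_sparseSquares).mem_of_tendsto (tendsto_pi_nhds.mpr fun a => hlim a.1)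
    (Eventually.of_forall fun m => (mem_sigmaSOS_iff (hpm_hom m)).mp (hpm m))
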